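/- Let Q_{i,j} be the number of knight walks ending at (i,j), and let S(z) = ∑_{i≥0} Q_{3i,0} z^{i+1} ∈ ℚ[[z]] (so that S(z³) = G(z) with G(x) = x³∑_i Q_{i,0}x^i). Let √(1−4t²) denote the power series (1−4t²)^{1/2} ∈ ℚ[[t]] with constant term 1, and U(t) = (1 − √(1−4t²))/(2t) ∈ ℚ[[t]]. Then the following identity holds in ℚ[[t]]: ∑_{i≥0} Q_{i,i} t^{2i+2} = ( t⁴ − 2·S(t³·U(t)) ) / √(1−4t²). -/

import Mathlib

/-- `w : Fin (n+1) → ℤ × ℤ` is a knight walk of length `n`: it starts at `(1,1)`, takes its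
steps in `{(-1,2), (2,-1)}` and all its vertices have nonnegative coordinates. -/
def IsKnightWalk (n : ℕ) (w : Fin (n + 1) → ℤ × ℤ) : Prop :=
  w 0 = (1, 1) ∧
  (∀ k : Fin n, w k.succ - w k.castSucc ∈ ({(-1, 2), (2, -1)} : Set (ℤ × ℤ))) ∧
  ∀ k, 0 ≤ (w k).1 ∧ 0 ≤ (w k).2

/-- `Q i j` is the number of knight walks (of any length) ending at `(i, j)`. -/
noncomputable def Q (i j : ℕ) : ℕ :=
  Nat.card {p : Σ n : ℕ, Fin (n + 1) → ℤ × ℤ //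
    IsKnightWalk p.1 p.2 ∧ p.2 (Fin.last p.1) = ((i : ℤ), (j : ℤ))}

/-- `S(z) = ∑_{i ≥ 0} Q_{3i,0} z^{i+1}`, so that `S(z³) = G(z)`. -/
noncomputable def Sser : PowerSeries ℚ :=
  PowerSeries.mk fun n => if 1 ≤ n then (Q (3 * (n - 1)) 0 : ℚ) else 0

/-- `∑_{i ≥ 0} Q_{i,i} t^{2i+2}`, the generating function of knight walks ending on the
main diagonal (a walk ending at `(i,i)` has length `2i − 2`, whence the shift by `t²`
coming from `t⁻²Q(tx, tx̄)` in the derivation). -/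
noncomputable def diagSer : PowerSeries ℚ :=
  PowerSeries.mk fun n =>
    if 2 ≤ n ∧ n % 2 = 0 then (Q ((n - 2) / 2) ((n - 2) / 2) : ℚ) else 0

/-- Composition `F(f)` of formal power series; this is the usual composition whenever `f`
has zero constant term. -/
noncomputable def composePS (F f : PowerSeries ℚ) : PowerSeries ℚ :=
  PowerSeries.mk fun N => PowerSeries.coeff N
    (∑ k ∈ Finset.range (N + 1), PowerSeries.C (PowerSeries.coeff k F) * f ^ k)


/-!
Writing `e = (x - y) / 3`, a knight walk becomes a `±1` walk from `0` subject to
`3 |e_k| ≤ k + 2` at every time `k`; the point `(i, i)` corresponds to `e = 0` at time `2i - 2`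
and `(3m + 3, 0)` to the extreme position `e = m + 1` at time `3m + 1`.

The generating functions `W_e = U^|e| / √(1 - 4t²)` of unconstrained walks from `0` to `e` are
the unique solution of `W_e = [e = 0] + t (W_{e-1} + W_{e+1})`. An unconstrained walk that
violates the constraint does so for the first time at some time `3m + 2`, at `±(m + 2)`, coming
from one of the `Q_{3m+3,0}` constrained walks to `±(m + 1)`; cutting it there gives
`W_e = C_e + ∑_m Q_{3m+3,0} t^(3m+2) (W_{e-m-2} + W_{e+m+2})`, where `C_e` counts constrained
walks. We verify this by checking that the right-hand side satisfies the same recursion.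
At `e = 0` it says `√(1 - 4t²) C_0 = 1 - 2 ∑_m Q_{3m+3,0} t^(3m+2) U^(m+2) = 1 - 2 S(t³U) / t⁴`,
and `∑ Q_{i,i} t^(2i+2) = t⁴ C_0`.
-/

open PowerSeries
open scoped PowerSeries.WithPiTopology

theorem PowerSeries.hasSum_of_X_pow_dvd {R : Type*} [Semiring R] [TopologicalSpace R]
    {g : ℕ → R⟦X⟧} (hg : ∀ k, X ^ k ∣ g k) :
    HasSum g (mk fun n => ∑ k ∈ Finset.range (n + 1), coeff n (g k)) := by
  rw [WithPiTopology.hasSum_iff_hasSum_coeff]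
  intro n
  rw [coeff_mk]
  exact hasSum_sum_of_ne_finset_zero fun k hk => X_pow_dvd_iff.1 (hg k) n (by simpa using hk)

theorem IsKnightWalk.fst_add_snd {n : ℕ} {w : Fin (n + 1) → ℤ × ℤ} (hw : IsKnightWalk n w)
    (k : Fin (n + 1)) : (w k).1 + (w k).2 = k + 2 := by
  induction k using Fin.induction with
  | zero => simp [hw.1]
  | succ k ih =>
    have hstep := hw.2.1 k
    simp only [Set.mem_insert_iff, Set.mem_singleton_iff, Prod.ext_iff, Prod.fst_sub,
      Prod.snd_sub] at hstep
    simp only [Fin.val_castSucc, Fin.val_succ] at ih ⊢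
    omega

theorem isKnightWalk_snoc_iff {n : ℕ} {v : Fin (n + 1) → ℤ × ℤ} {p : ℤ × ℤ} :
    IsKnightWalk (n + 1) (Fin.snoc v p) ↔ IsKnightWalk n v ∧
      p - v (Fin.last n) ∈ ({(-1, 2), (2, -1)} : Set (ℤ × ℤ)) ∧ 0 ≤ p.1 ∧ 0 ≤ p.2 := by
  simp only [IsKnightWalk, Fin.forall_fin_succ' (n := n), Fin.forall_fin_succ' (n := n + 1),
    Fin.succ_castSucc, Fin.succ_last, Fin.snoc_castSucc, Fin.snoc_last, ← Fin.castSucc_zero]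
  tauto

namespace KnightWalk

def walksTo (n : ℕ) (p : ℤ × ℤ) : Set (Fin (n + 1) → ℤ × ℤ) :=
  {w | IsKnightWalk n w ∧ w (Fin.last n) = p}

theorem walksTo_finite (n : ℕ) (p : ℤ × ℤ) : (walksTo n p).Finite := by
  refine (Set.Finite.pi fun _ => (Set.finite_Icc 0 (n + 2 : ℤ)).prod
    (Set.finite_Icc 0 (n + 2 : ℤ))).subset fun w hw k _ => ?_
  have hsum := hw.1.fst_add_snd k
  have hnonneg := hw.1.2.2 k
  simp only [Set.mem_prod, Set.mem_Icc]
  omega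

theorem walksTo_eq_empty {n : ℕ} {p : ℤ × ℤ} (hp : p.1 < 0 ∨ p.2 < 0) : walksTo n p = ∅ :=
  Set.eq_empty_of_forall_notMem fun w hw => by
    have := hw.1.2.2 (Fin.last n)
    rw [hw.2] at this
    omega

theorem ncard_walksTo_zero (p : ℤ × ℤ) :
    (walksTo 0 p).ncard = if p = (1, 1) then 1 else 0 := by
  split_ifs with hp
  · subst hp
    convert Set.ncard_singleton (fun _ : Fin 1 => ((1 : ℤ), (1 : ℤ)))
    ext w
    simp +contextual [walksTo, IsKnightWalk, funext_iff, Fin.forall_fin_one]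
  · convert Set.ncard_empty (Fin 1 → ℤ × ℤ)
    refine Set.eq_empty_of_forall_notMem fun w hw => hp ?_
    rw [← hw.2]
    exact hw.1.1

theorem walksTo_succ {n : ℕ} {p : ℤ × ℤ} (hp : 0 ≤ p.1 ∧ 0 ≤ p.2) :
    walksTo (n + 1) p =
      (Fin.snoc · p) '' (walksTo n (p - (-1, 2)) ∪ walksTo n (p - (2, -1))) := by
  ext w
  constructor
  · rintro ⟨hw, rfl⟩
    rw [← Fin.snoc_init_self w, isKnightWalk_snoc_iff] at hw
    refine ⟨Fin.init w, ?_, Fin.snoc_init_self w⟩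
    obtain ⟨hinit, hstep | hstep, -⟩ := hw
    · exact .inl ⟨hinit, by rw [← hstep, sub_sub_cancel]⟩
    · exact .inr ⟨hinit, by rw [← hstep, sub_sub_cancel]⟩
  · rintro ⟨v, ⟨hv, hlast⟩ | ⟨hv, hlast⟩, rfl⟩ <;>
      refine ⟨isKnightWalk_snoc_iff.2 ⟨hv, ?_, hp⟩, Fin.snoc_last _ _⟩ <;>
      simp [hlast]

theorem ncard_walksTo_succ {n : ℕ} {p : ℤ × ℤ} (hp : 0 ≤ p.1 ∧ 0 ≤ p.2) :
    (walksTo (n + 1) p).ncard =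
      (walksTo n (p - (-1, 2))).ncard + (walksTo n (p - (2, -1))).ncard := by
  have hsnoc := (Fin.snoc_injective2 (α := fun _ : Fin (n + 2) => ℤ × ℤ)).left p
  rw [walksTo_succ hp, Set.ncard_image_of_injective _ hsnoc,
    Set.ncard_union_eq _ (walksTo_finite _ _) (walksTo_finite _ _)]
  refine Set.disjoint_left.2 fun w h₁ h₂ => ?_
  have := h₁.2.symm.trans h₂.2
  simp [Prod.ext_iff] at this

def confinedWalks : ℕ → ℤ → ℕ
  | 0, e => if e = 0 then 1 else 0
  | n + 1, e =>
    if 3 * e.natAbs ≤ n + 3 then confinedWalks n (e - 1) + confinedWalks n (e + 1) else 0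

def exitWalks : ℕ → ℤ → ℕ
  | 0, _ => 0
  | n + 1, e =>
    if 3 * e.natAbs ≤ n + 3 then 0 else confinedWalks n (e - 1) + confinedWalks n (e + 1)

def boundaryWalks (m : ℕ) : ℕ := confinedWalks (3 * m + 1) (m + 1)

theorem confinedWalks_succ_add_exitWalks_succ (n : ℕ) (e : ℤ) :
    confinedWalks (n + 1) e + exitWalks (n + 1) e =
      confinedWalks n (e - 1) + confinedWalks n (e + 1) := by
  simp only [confinedWalks, exitWalks]
  split_ifs <;> simp

theorem confinedWalks_neg (n : ℕ) (e : ℤ) : confinedWalks n (-e) = confinedWalks n e := by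
  induction n generalizing e with
  | zero => simp [confinedWalks]
  | succ n ih =>
    rw [confinedWalks, confinedWalks, Int.natAbs_neg, show -e - 1 = -(e + 1) by ring,
      show -e + 1 = -(e - 1) by ring, ih, ih, add_comm (confinedWalks n (e + 1))]

theorem confinedWalks_eq_zero_of_lt {n : ℕ} {e : ℤ} (h : n + 2 < 3 * e.natAbs) :
    confinedWalks n e = 0 := by
  induction n generalizing e with
  | zero => rw [confinedWalks, if_neg (by omega)]
  | succ n ih =>
    rw [confinedWalks]
    split_ifs
    · rw [ih (by omega), ih (by omega)]
    · rfl

theorem confinedWalks_eq_zero_of_not_dvd {n : ℕ} {e : ℤ} (h : ¬ 2 ∣ e + n) :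
    confinedWalks n e = 0 := by
  induction n generalizing e with
  | zero => rw [confinedWalks, if_neg (by omega)]
  | succ n ih =>
    rw [confinedWalks, ih (by omega), ih (by omega)]
    simp

theorem exitWalks_eq (n : ℕ) (e : ℤ) :
    exitWalks n e = if n + 4 = 3 * e.natAbs then boundaryWalks (e.natAbs - 2) else 0 := by
  cases n with
  | zero => rw [exitWalks, if_neg (by omega)]
  | succ n =>
    rw [exitWalks]
    split_ifs with hin hexit hexit
    · omega
    · rfl
    · obtain ⟨m, rfl, he⟩ : ∃ m, n = 3 * m + 1 ∧ e.natAbs = m + 2 := ⟨e.natAbs - 2, by omega⟩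
      rw [he, Nat.add_sub_cancel, boundaryWalks]
      rcases Int.natAbs_eq e with h | h <;> rw [h, he]
      · rw [show ((m + 2 : ℕ) : ℤ) - 1 = m + 1 by push_cast; ring,
          confinedWalks_eq_zero_of_lt (e := (m + 2 : ℕ) + 1) (by omega), add_zero]
      · rw [show -((m + 2 : ℕ) : ℤ) - 1 = -(m + 3) by push_cast; ring,
          show -((m + 2 : ℕ) : ℤ) + 1 = -(m + 1) by push_cast; ring,
          confinedWalks_neg, confinedWalks_neg, confinedWalks_eq_zero_of_lt (by omega), zero_add]
    · have hvanish : ∀ d : ℤ, (d - e).natAbs = 1 → confinedWalks n d = 0 := fun d hd => by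
        by_cases hlt : n + 2 < 3 * d.natAbs
        · exact confinedWalks_eq_zero_of_lt hlt
        · exact confinedWalks_eq_zero_of_not_dvd (by omega)
      rw [hvanish _ (by omega), hvanish _ (by omega)]

theorem ncard_walksTo_eq_confinedWalks (n : ℕ) (p : ℤ × ℤ) (e : ℤ)
    (hsum : p.1 + p.2 = n + 2) (hdiff : p.1 - p.2 = 3 * e) :
    (walksTo n p).ncard = confinedWalks n e := by
  induction n generalizing p e with
  | zero =>
    have hp : p = (1, 1) ↔ e = 0 := by
      rw [Prod.ext_iff]
      omega
    simp only [ncard_walksTo_zero, confinedWalks, hp]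
  | succ n ih =>
    by_cases hp : 0 ≤ p.1 ∧ 0 ≤ p.2
    · have hshift : ∀ d : ℤ × ℤ, d.1 + d.2 = 1 →
          (p - d).1 + (p - d).2 = n + 2 ∧ (p - d).1 - (p - d).2 = p.1 - p.2 - (d.1 - d.2) :=
        fun d hd => by simp only [Prod.fst_sub, Prod.snd_sub]; omega
      obtain ⟨h₁, h₁'⟩ := hshift (-1, 2) rfl
      obtain ⟨h₂, h₂'⟩ := hshift (2, -1) rfl
      rw [ncard_walksTo_succ hp, ih _ (e + 1) h₁ (by omega), ih _ (e - 1) h₂ (by omega),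
        confinedWalks, if_pos (by omega), add_comm]
    · rw [walksTo_eq_empty (by omega), Set.ncard_empty,
        confinedWalks_eq_zero_of_lt (by omega)]

theorem Q_eq_ncard_walksTo {i j n : ℕ} (h : i + j = n + 2) :
    Q i j = (walksTo n (i, j)).ncard := by
  rw [Q, ← Nat.card_coe_set_eq]
  symm
  refine Nat.card_congr (Equiv.ofBijective (fun w => ⟨⟨n, w.1⟩, w.2⟩) ⟨fun w w' hw => ?_, ?_⟩)
  · exact Subtype.ext <| by simpa using congrArg Subtype.val hw
  · rintro ⟨⟨m, w⟩, hw, hlast⟩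
    have hsum := hw.fst_add_snd (Fin.last m)
    simp only at hlast
    simp only [hlast, Fin.val_last] at hsum
    obtain rfl : m = n := by omega
    exact ⟨⟨w, hw, hlast⟩, rfl⟩

theorem Q_zero_zero : Q 0 0 = 0 := by
  rw [Q, Nat.card_eq_zero]
  refine .inl ⟨fun ⟨⟨m, w⟩, hw, hlast⟩ => ?_⟩
  have hsum := hw.fst_add_snd (Fin.last m)
  simp only at hlast
  simp only [hlast, Fin.val_last] at hsum
  omega

theorem Q_eq_confinedWalks {i j n : ℕ} {e : ℤ} (hsum : i + j = n + 2)
    (hdiff : (i : ℤ) - j = 3 * e) : Q i j = confinedWalks n e := by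
  rw [Q_eq_ncard_walksTo hsum,
    ncard_walksTo_eq_confinedWalks n _ e (by dsimp only; omega) hdiff]

variable {R : Type*}

def IsFreeWalkGF [Semiring R] (H : ℤ → R⟦X⟧) : Prop :=
  ∀ e, H e = (if e = 0 then 1 else 0) + X * (H (e - 1) + H (e + 1))

theorem IsFreeWalkGF.unique [Ring R] {H H' : ℤ → R⟦X⟧} (hH : IsFreeWalkGF H)
    (hH' : IsFreeWalkGF H') : H = H' := by
  have hdvd : ∀ n e, (X : R⟦X⟧) ^ n ∣ H e - H' e := by
    intro n
    induction n with
    | zero => simp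
    | succ n ih =>
      intro e
      have hsub : H e - H' e = X * ((H (e - 1) - H' (e - 1)) + (H (e + 1) - H' (e + 1))) := by
        rw [hH e, hH' e]
        noncomm_ring
      rw [hsub, pow_succ']
      exact mul_dvd_mul_left X (dvd_add (ih _) (ih _))
  funext e
  rw [← sub_eq_zero]
  ext n
  simpa using X_pow_dvd_iff.1 (hdvd (n + 1) e) n n.lt_succ_self

theorem isFreeWalkGF_pow_natAbs_mul [CommRing R] {U V : R⟦X⟧} (hU : U = X * (1 + U ^ 2))
    (hV : V * (1 - 2 * X * U) = 1) : IsFreeWalkGF fun e => U ^ e.natAbs * V := by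
  intro e
  by_cases he : e = 0
  · subst he
    simp only [Int.natAbs_zero, pow_zero, one_mul, if_true, zero_sub, Int.natAbs_neg, zero_add,
      Int.natAbs_one, pow_one]
    linear_combination hV
  obtain ⟨a, ha⟩ : ∃ a, e.natAbs = a + 1 := Nat.exists_eq_succ_of_ne_zero (by omega)
  obtain ⟨h₁, h₂⟩ | ⟨h₁, h₂⟩ : (e - 1).natAbs = a ∧ (e + 1).natAbs = a + 2 ∨
      (e - 1).natAbs = a + 2 ∧ (e + 1).natAbs = a := by omega
  all_goals
    simp only [ha, h₁, h₂, he, if_false, zero_add]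
    linear_combination U ^ a * V * hU

theorem eq_X_mul_one_add_sq [CommRing R] [IsDomain R] [CharZero R] {sq U : R⟦X⟧}
    (hsq : sq ^ 2 = 1 - 4 * X ^ 2) (hU : 2 * X * U = 1 - sq) : U = X * (1 + U ^ 2) := by
  have h : (4 * X : R⟦X⟧) * (U - X * (1 + U ^ 2)) = 0 := by
    linear_combination -hsq + (sq + 1 - 2 * X * U) * hU
  have h4 : (4 : R⟦X⟧) ≠ 0 := fun h4 => by
    have := congrArg constantCoeff h4
    rw [map_ofNat, map_zero] at this
    norm_num at this
  exact sub_eq_zero.1 ((mul_eq_zero.1 h).resolve_left (mul_ne_zero h4 X_ne_zero))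

variable (R) in
noncomputable def confinedGF [Semiring R] (e : ℤ) : R⟦X⟧ := mk fun n => (confinedWalks n e : R)

variable (R) in
noncomputable def exitGF [Semiring R] (e : ℤ) : R⟦X⟧ := mk fun n => (exitWalks n e : R)

theorem confinedGF_add_exitGF [Semiring R] (e : ℤ) :
    confinedGF R e + exitGF R e =
      (if e = 0 then 1 else 0) + X * (confinedGF R (e - 1) + confinedGF R (e + 1)) := by
  ext (_ | n)
  · by_cases he : e = 0 <;> simp [confinedGF, exitGF, confinedWalks, exitWalks, he]
  · simp only [confinedGF, exitGF, map_add, coeff_mk, coeff_succ_X_mul]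
    have := congrArg (Nat.cast : ℕ → R) (confinedWalks_succ_add_exitWalks_succ n e)
    push_cast at this
    split_ifs <;> simpa using this

/-- Walks that first violate the constraint at time `3m + 2` (at `±(m + 2)`, in `boundaryWalks m`
ways) and then continue as walks counted by `W`, ending at `e`. -/
noncomputable def firstExitTerm [Semiring R] (W : ℤ → R⟦X⟧) (e : ℤ) (m : ℕ) : R⟦X⟧ :=
  C (boundaryWalks m : R) * X ^ (3 * m + 2) * (W (e - (m + 2)) + W (e + (m + 2)))

theorem X_pow_dvd_firstExitTerm [CommSemiring R] (W : ℤ → R⟦X⟧) (e : ℤ) (m : ℕ) :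
    X ^ m ∣ firstExitTerm W e m :=
  ((pow_dvd_pow X (by omega : m ≤ 3 * m + 2)).mul_left (C (boundaryWalks m : R))).mul_right _

theorem hasSum_firstExitTerm_ite [Semiring R] [TopologicalSpace R] (e : ℤ) :
    HasSum (firstExitTerm (fun d => if d = 0 then 1 else 0) e) (exitGF R e) := by
  have hdelta : ∀ m : ℕ, ((if e - (m + 2) = 0 then 1 else 0) + if e + (m + 2) = 0 then 1 else 0
      : R⟦X⟧) = if e.natAbs = m + 2 then 1 else 0 := fun m => by
    split_ifs <;> first | omega | simp
  convert hasSum_single (e.natAbs - 2) fun m hm => ?_ using 1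
  · ext n
    simp only [firstExitTerm, hdelta, exitGF, coeff_mk, exitWalks_eq]
    split_ifs with hn he
    · rw [mul_one, coeff_C_mul_X_pow, if_pos (by omega)]
    · omega
    · rw [mul_one, coeff_C_mul_X_pow, if_neg (by omega), Nat.cast_zero]
    · rw [mul_zero, map_zero, Nat.cast_zero]
  · simp only [firstExitTerm, hdelta]
    rw [if_neg (by omega), mul_zero]

theorem X_mul_firstExitTerm_add [CommRing R] {W : ℤ → R⟦X⟧} (hW : IsFreeWalkGF W)
    (e : ℤ) (m : ℕ) :
    X * (firstExitTerm W (e - 1) m + firstExitTerm W (e + 1) m) =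
      firstExitTerm W e m - firstExitTerm (fun d => if d = 0 then 1 else 0) e m := by
  have h₁ := hW (e - (m + 2))
  have h₂ := hW (e + (m + 2))
  rw [show e - (m + 2) - 1 = e - 1 - (m + 2) by ring,
    show e - (m + 2) + 1 = e + 1 - (m + 2) by ring] at h₁
  rw [show e + (m + 2) - 1 = e - 1 + (m + 2) by ring,
    show e + (m + 2) + 1 = e + 1 + (m + 2) by ring] at h₂
  simp only [firstExitTerm]
  linear_combination -C (boundaryWalks m : R) * X ^ (3 * m + 2) * (h₁ + h₂)

theorem hasSum_firstExitTerm [CommRing R] [TopologicalSpace R] [IsTopologicalRing R]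
    [T2Space R] {W : ℤ → R⟦X⟧} (hW : IsFreeWalkGF W) (e : ℤ) :
    HasSum (firstExitTerm W e) (W e - confinedGF R e) := by
  have hsum : ∀ e, HasSum (firstExitTerm W e) (∑' m, firstExitTerm W e m) := fun e =>
    (hasSum_of_X_pow_dvd (X_pow_dvd_firstExitTerm W e)).summable.hasSum
  suffices h : IsFreeWalkGF fun e => confinedGF R e + ∑' m, firstExitTerm W e m by
    rw [← congrFun (h.unique hW) e, add_sub_cancel_left]
    exact hsum e
  intro e
  have hX : (X : R⟦X⟧) * ((∑' m, firstExitTerm W (e - 1) m) + ∑' m, firstExitTerm W (e + 1) m)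
      = (∑' m, firstExitTerm W e m) - exitGF R e :=
    (((hsum _).add (hsum _)).mul_left X).unique <| by
      simpa only [X_mul_firstExitTerm_add hW] using (hsum e).sub (hasSum_firstExitTerm_ite e)
  linear_combination confinedGF_add_exitGF (R := R) e - hX

theorem hasSum_boundaryWalks [CommRing R] [TopologicalSpace R] [IsTopologicalRing R]
    [T2Space R] {U V : R⟦X⟧} (hU : U = X * (1 + U ^ 2)) (hV : V * (1 - 2 * X * U) = 1) :
    HasSum (fun m => 2 * (C (boundaryWalks m : R) * X ^ (3 * m + 2) * U ^ (m + 2)))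
      (1 - (1 - 2 * X * U) * confinedGF R 0) := by
  have hterm : ∀ m, (1 - 2 * X * U) * firstExitTerm (fun e => U ^ e.natAbs * V) 0 m =
      2 * (C (boundaryWalks m : R) * X ^ (3 * m + 2) * U ^ (m + 2)) := fun m => by
    simp only [firstExitTerm, zero_sub, zero_add, Int.natAbs_neg,
      show ((m : ℤ) + 2).natAbs = m + 2 by omega]
    linear_combination (2 * C (boundaryWalks m : R) * X ^ (3 * m + 2) * U ^ (m + 2)) * hV
  have hvalue : (1 - 2 * X * U) * (U ^ (0 : ℤ).natAbs * V - confinedGF R 0) =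
      1 - (1 - 2 * X * U) * confinedGF R 0 := by
    simp only [Int.natAbs_zero, pow_zero, one_mul]
    linear_combination hV
  have h := (hasSum_firstExitTerm (isFreeWalkGF_pow_natAbs_mul hU hV) 0).mul_left (1 - 2 * X * U)
  simp only [hterm] at h
  rwa [hvalue] at h

theorem diagSer_eq : diagSer = X ^ 4 * confinedGF ℚ 0 := by
  ext N
  rw [coeff_X_pow_mul']
  simp only [diagSer, confinedGF, coeff_mk]
  split_ifs with hdiag h4 h4
  · obtain ⟨k, rfl⟩ : ∃ k, N = 2 * k + 4 := ⟨(N - 4) / 2, by omega⟩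
    rw [Q_eq_confinedWalks (n := 2 * k) (e := 0) (by omega) (by simp)]
    congr 2
  · obtain rfl : N = 2 := by omega
    simp [Q_zero_zero]
  · rw [confinedWalks_eq_zero_of_not_dvd (by omega), Nat.cast_zero]
  · rfl

theorem hasSum_composePS {F f : ℚ⟦X⟧} (hf : constantCoeff f = 0) :
    HasSum (fun k => C (coeff k F) * f ^ k) (composePS F f) := by
  convert hasSum_of_X_pow_dvd fun k =>
    (pow_dvd_pow_of_dvd (X_dvd_iff.2 hf) k).mul_left (C (coeff k F))
  ext n
  simp [composePS]

theorem hasSum_composePS_Sser (U : ℚ⟦X⟧) :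
    HasSum (fun m => X ^ 4 * (C (boundaryWalks m : ℚ) * X ^ (3 * m + 2) * U ^ (m + 2)))
      (composePS Sser (X ^ 3 * U)) := by
  have h := hasSum_composePS (F := Sser) (f := X ^ 3 * U) (by simp)
  rw [← hasSum_nat_add_iff' 2] at h
  have hterm : ∀ m, C (coeff (m + 2) Sser) * (X ^ 3 * U) ^ (m + 2) =
      X ^ 4 * (C (boundaryWalks m : ℚ) * X ^ (3 * m + 2) * U ^ (m + 2)) := fun m => by
    rw [Sser, coeff_mk, if_pos (by omega), boundaryWalks,
      Q_eq_confinedWalks (n := 3 * m + 1) (e := m + 1) (by omega) (by push_cast; omega)]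
    ring
  have hlow : ∑ k ∈ Finset.range 2, C (coeff k Sser) * (X ^ 3 * U) ^ k = 0 := by
    simp [Finset.sum_range_succ, Sser, Q_zero_zero]
  rw [hlow, sub_zero] at h
  simpa only [hterm] using h

end KnightWalk

open KnightWalk in
theorem knight_diagonal_identity_general (sq U : PowerSeries ℚ)
    (hsq : sq ^ 2 = 1 - 4 * PowerSeries.X ^ 2)
    (hU : 2 * PowerSeries.X * U = 1 - sq) :
    diagSer = (PowerSeries.X ^ 4 -
      2 * composePS Sser (PowerSeries.X ^ 3 * U)) * sq⁻¹ := by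
  have hsq_eq : sq = 1 - 2 * X * U := by linear_combination hU
  have hsq_inv : sq * sq⁻¹ = 1 := PowerSeries.mul_inv_cancel _ (by simp [hsq_eq])
  have hV : sq⁻¹ * (1 - 2 * X * U) = 1 := by rw [← hsq_eq, mul_comm, hsq_inv]
  have hcomp : 2 * composePS Sser (X ^ 3 * U) = X ^ 4 * (1 - sq * confinedGF ℚ 0) := by
    rw [hsq_eq]
    refine ((hasSum_composePS_Sser U).mul_left 2).unique ?_
    simpa only [mul_left_comm] using
      (hasSum_boundaryWalks (eq_X_mul_one_add_sq hsq hU) hV).mul_left (X ^ 4)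
  rw [diagSer_eq, hcomp]
  linear_combination (-X ^ 4 * confinedGF ℚ 0) * hsq_inv

/-- If `sq = √(1 − 4t²)` is the power series with constant term `1` whose square is
`1 − 4t²`, and `U(t) = (1 − √(1 − 4t²))/(2t)`, then
`∑_{i ≥ 0} Q_{i,i} t^{2i+2} = (t⁴ − 2 S(t³ U(t))) / √(1 − 4t²)` in `ℚ[[t]]`. -/
theorem knight_diagonal_identity (sq U : PowerSeries ℚ)
    (hsq1 : PowerSeries.constantCoeff sq = 1)
    (hsq : sq ^ 2 = 1 - 4 * PowerSeries.X ^ 2)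
    (hU : 2 * PowerSeries.X * U = 1 - sq) :
    diagSer = (PowerSeries.X ^ 4 -
      2 * composePS Sser (PowerSeries.X ^ 3 * U)) * sq⁻¹ :=
  knight_diagonal_identity_general sq U hsq hU
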